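/- arXiv:2006.09872 — 8 statements merged into one kernel-verified Lean document; each statement's English description precedes it below -/
import Mathlib

section
/- Let S be a feasible schedule for a PFB instance and let σ be an earliest release date ordering of the jobs. Then there exists a feasible permutation schedule Ŝ ordered by σ such that for every machine i ∈ {1,…,m} the multiset {c_{i,j}(Ŝ) : j ∈ {1,…,n}} equals the multiset {c_{i,j}(S) : j ∈ {1,…,n}}; in particular, the multiset of job completion times {C_j(Ŝ) : j} equals {C_j(S) : j}. -/
/-- A PFB instance has `m+1` machines (indexed by `Fin (m+1)`, so at least one) and
`n+1` jobs (indexed by `Fin (n+1)`, so at least one). `p i` is the processing time of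
machine `i`, `b i` its maximum batch size, `r j` the release date of job `j`.
A schedule `c` assigns to machine `i` and job `j` the completion time `c i j`.
`Feasible p b r c` says: (i) each job finishes on the first machine no earlier than its
release date plus `p 0`; (ii) consecutive machines leave enough processing time;
(iii) two jobs with different completion times on a machine differ by at least the
processing time (jobs with equal completion time form one batch); (iv) at most `b i`
jobs complete at any given time on machine `i`. -/
def Feasible {m n : ℕ} (p b : Fin (m + 1) → ℕ) (r : Fin (n + 1) → ℕ)
    (c : Fin (m + 1) → Fin (n + 1) → ℕ) : Prop :=
  (∀ j, r j + p 0 ≤ c 0 j) ∧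
  (∀ (i : Fin m) (j : Fin (n + 1)), c i.castSucc j + p i.succ ≤ c i.succ j) ∧
  (∀ (i : Fin (m + 1)) (j j' : Fin (n + 1)),
      c i j ≠ c i j' → c i j + p i ≤ c i j' ∨ c i j' + p i ≤ c i j) ∧
  (∀ (i : Fin (m + 1)) (t : ℕ),
      (Finset.univ.filter (fun j => c i j = t)).card ≤ b i)

/-- `c` is a permutation schedule ordered by the permutation `σ`:
on every machine the completion times are nondecreasing along `σ`. -/
def OrderedBy {m n : ℕ} (c : Fin (m + 1) → Fin (n + 1) → ℕ)
    (σ : Equiv.Perm (Fin (n + 1))) : Prop :=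
  ∀ i : Fin (m + 1), Monotone fun j => c i (σ j)

/-
Sort the completion times of every machine and hand the `k`-th smallest one to job `σ k`.
This permutes the values within each machine, so batches, gaps and batch sizes are unchanged.
The precedence constraints survive because taking the `k`-th order statistic is monotone:
if `f j + a ≤ g j` for all `j`, the `k`-th smallest value of `f` plus `a` is at most the `k`-th
smallest value of `g`. For the release dates, `r ∘ σ` is already sorted, so its `k`-th order
statistic is `r (σ k)`.
-/

open Finset Equiv

section OrderStatistic

variable {α : Type*} [LinearOrder α] {N : ℕ}

lemma card_filter_perm {ι : Type*} [Fintype ι] (P : ι → Prop) [DecidablePred P]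
    (τ : Perm ι) : #{j | P (τ j)} = #{j | P j} :=
  card_equiv τ (by simp)

/-- The `k`-th smallest value of `f`, counted with multiplicity from `k = 0`. -/
def orderStat (f : Fin N → α) : Fin N → α := f ∘ Tuple.sort f

lemma monotone_orderStat (f : Fin N → α) : Monotone (orderStat f) := Tuple.monotone_sort f

lemma orderStat_eq_self {f : Fin N → α} (hf : Monotone f) : orderStat f = f := by
  rw [orderStat, Tuple.sort_eq_refl_iff_monotone.mpr hf, coe_refl, Function.comp_id]

lemma orderStat_comp_perm (f : Fin N → α) (τ : Perm (Fin N)) :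
    orderStat (f ∘ τ) = orderStat f :=
  Tuple.comp_perm_comp_sort_eq_comp_sort

lemma map_univ_val_orderStat (f : Fin N → α) :
    univ.val.map (orderStat f) = univ.val.map f := by
  rw [orderStat, ← Multiset.map_map, Multiset.map_univ_val_equiv]

lemma le_orderStat_iff {f : Fin N → α} {a : α} {k : Fin N} :
    a ≤ orderStat f k ↔ #{j | f j < a} ≤ k := by
  rw [← card_filter_perm (f · < a) (Tuple.sort f)]
  change _ ↔ #{j | orderStat f j < a} ≤ k
  rw [← not_lt, ← not_lt, Tuple.lt_card_lt_iff_apply_lt_of_monotone (monotone_orderStat f)]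

lemma map_orderStat_le_orderStat {β : Type*} [LinearOrder β] {φ : α → β} (hφ : StrictMono φ)
    {f : Fin N → α} {g : Fin N → β} (h : ∀ j, φ (f j) ≤ g j) (k : Fin N) :
    φ (orderStat f k) ≤ orderStat g k := by
  rw [le_orderStat_iff]
  calc #{j | g j < φ (orderStat f k)}
      ≤ #{j | f j < orderStat f k} :=
        card_le_card fun j => by
          simpa only [mem_filter, mem_univ, true_and] using
            fun hj => hφ.lt_iff_lt.mp ((h j).trans_lt hj)
    _ ≤ k := le_orderStat_iff.mp le_rfl

end OrderStatistic

section Schedule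

def sortAlong {m n : ℕ} (c : Fin (m + 1) → Fin (n + 1) → ℕ) (σ : Perm (Fin (n + 1))) :
    Fin (m + 1) → Fin (n + 1) → ℕ :=
  fun i j => orderStat (c i) (σ.symm j)

variable {m n : ℕ} {c : Fin (m + 1) → Fin (n + 1) → ℕ} {σ : Perm (Fin (n + 1))}

lemma sortAlong_apply (i : Fin (m + 1)) (j : Fin (n + 1)) :
    sortAlong c σ i j = c i ((σ.symm.trans (Tuple.sort (c i))) j) :=
  rfl

lemma sortAlong_apply_perm (i : Fin (m + 1)) (k : Fin (n + 1)) :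
    sortAlong c σ i (σ k) = orderStat (c i) k := by
  simp only [sortAlong, symm_apply_apply]

lemma orderedBy_sortAlong : OrderedBy (sortAlong c σ) σ := fun i k l hkl => by
  simpa only [sortAlong_apply_perm] using monotone_orderStat (c i) hkl

lemma map_univ_val_sortAlong (i : Fin (m + 1)) :
    univ.val.map (sortAlong c σ i) = univ.val.map (c i) := by
  calc univ.val.map (sortAlong c σ i) = (univ.val.map σ.symm).map (orderStat (c i)) := by
        rw [Multiset.map_map]; rfl
    _ = univ.val.map (c i) := by
        rw [Multiset.map_univ_val_equiv, map_univ_val_orderStat]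

lemma feasible_sortAlong {p b : Fin (m + 1) → ℕ} {r : Fin (n + 1) → ℕ}
    (hc : Feasible p b r c) (hσ : Monotone fun j => r (σ j)) :
    Feasible p b r (sortAlong c σ) := by
  obtain ⟨hrel, hflow, hgap, hcap⟩ := hc
  refine ⟨fun j => ?_, fun i j => ?_, fun i j j' => ?_, fun i t => ?_⟩
  · obtain ⟨k, rfl⟩ := σ.surjective j
    have h := map_orderStat_le_orderStat (add_left_strictMono (a := p 0))
      (f := fun j => r (σ j)) (g := c 0 ∘ σ) (fun j => hrel (σ j)) k
    rwa [orderStat_eq_self hσ, orderStat_comp_perm, ← sortAlong_apply_perm (σ := σ)] at h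
  · obtain ⟨k, rfl⟩ := σ.surjective j
    simp only [sortAlong_apply_perm]
    exact map_orderStat_le_orderStat add_left_strictMono (hflow i) k
  · simp only [sortAlong_apply]
    exact hgap i _ _
  · exact (card_filter_perm (c i · = t) (σ.symm.trans (Tuple.sort (c i)))).trans_le (hcap i t)

end Schedule

theorem stmt0_general {m n : ℕ} (p b : Fin (m + 1) → ℕ) (r : Fin (n + 1) → ℕ)
    (c : Fin (m + 1) → Fin (n + 1) → ℕ) (hc : Feasible p b r c)
    (σ : Equiv.Perm (Fin (n + 1))) (hσ : Monotone fun j => r (σ j)) :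
    ∃ chat : Fin (m + 1) → Fin (n + 1) → ℕ,
      Feasible p b r chat ∧ OrderedBy chat σ ∧
      ∀ i : Fin (m + 1),
        (Finset.univ.val.map fun j => chat i j) =
          (Finset.univ.val.map fun j => c i j) :=
  ⟨sortAlong c σ, feasible_sortAlong hc hσ, orderedBy_sortAlong, map_univ_val_sortAlong⟩

/-- for any feasible schedule `c` and any earliest release date ordering
`σ`, there is a feasible permutation schedule ordered by `σ` whose multiset of
completion times on every machine (in particular on the last machine) coincides with
that of `c`. -/
theorem stmt0 {m n : ℕ} (p b : Fin (m + 1) → ℕ) (r : Fin (n + 1) → ℕ)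
    (hp : ∀ i, 1 ≤ p i) (hb : ∀ i, 1 ≤ b i ∧ b i ≤ n + 1)
    (c : Fin (m + 1) → Fin (n + 1) → ℕ) (hc : Feasible p b r c)
    (σ : Equiv.Perm (Fin (n + 1))) (hσ : Monotone fun j => r (σ j)) :
    ∃ chat : Fin (m + 1) → Fin (n + 1) → ℕ,
      Feasible p b r chat ∧ OrderedBy chat σ ∧
      ∀ i : Fin (m + 1),
        (Finset.univ.val.map fun j => chat i j) =
          (Finset.univ.val.map fun j => c i j) :=
  stmt0_general p b r c hc σ hσ
end

section
/- For a PFB instance, let σ be an earliest release date ordering of the jobs. Then for every feasible schedule S there exists a feasible permutation schedule Ŝ ordered by σ with max_{j∈{1,…,n}} C_j(Ŝ) ≤ max_{j∈{1,…,n}} C_j(S). In particular, permutation schedules ordered by σ are optimal for minimizing the makespan. -/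
open Finset

namespace Tuple

variable {N : ℕ} {α : Type*} [LinearOrder α] {u v : Fin N → α}

theorem apply_sort_le_apply_sort (huv : u ≤ v) (k : Fin N) :
    u (sort u k) ≤ v (sort v k) := by
  set a := v (sort v k)
  have hv : k < #{i | v (sort v i) ≤ a} :=
    (lt_card_le_iff_apply_le_of_monotone (monotone_sort v)).mpr le_rfl
  have hcard : #{i | v (sort v i) ≤ a} ≤ #{i | u (sort u i) ≤ a} :=
    calc #{i | v (sort v i) ≤ a} = #{i | v i ≤ a} := card_equiv (sort v) (by simp)
      _ ≤ #{i | u i ≤ a} := card_le_card fun i => by simpa using (huv i).trans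
      _ = #{i | u (sort u i) ≤ a} := (card_equiv (sort u) (by simp)).symm
  exact (lt_card_le_iff_apply_le_of_monotone (monotone_sort u)).mp (hv.trans_le hcard)

theorem apply_le_apply_sort_of_monotone_comp (huv : u ≤ v) {e : Equiv.Perm (Fin N)}
    (hue : Monotone (u ∘ e)) (k : Fin N) : u (e k) ≤ v (sort v k) :=
  (congrFun (comp_sort_eq_comp_iff_monotone.mpr hue) k).trans_le (apply_sort_le_apply_sort huv k)

end Tuple

section SortedSchedule

variable {m n : ℕ}

def sortedSchedule (c : Fin (m + 1) → Fin (n + 1) → ℕ) (σ : Equiv.Perm (Fin (n + 1))) :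
    Fin (m + 1) → Fin (n + 1) → ℕ :=
  fun i j => c i (Tuple.sort (c i) (σ.symm j))

variable (c : Fin (m + 1) → Fin (n + 1) → ℕ) (σ : Equiv.Perm (Fin (n + 1)))

theorem orderedBy_sortedSchedule : OrderedBy (sortedSchedule c σ) σ := by
  intro i k l hkl
  simpa [sortedSchedule] using Tuple.monotone_sort (c i) hkl

theorem sup_sortedSchedule (i : Fin (m + 1)) :
    univ.sup (sortedSchedule c σ i) = univ.sup (c i) := by
  conv_rhs => rw [← map_univ_equiv (σ.symm.trans (Tuple.sort (c i))), sup_map]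
  rfl

theorem feasible_sortedSchedule {p b : Fin (m + 1) → ℕ} {r : Fin (n + 1) → ℕ}
    (hc : Feasible p b r c) (hσ : Monotone fun k => r (σ k)) :
    Feasible p b r (sortedSchedule c σ) := by
  obtain ⟨hrelease, hprec, hbatch, hsize⟩ := hc
  refine ⟨fun j => ?_, fun i j => ?_, fun i j j' => hbatch i _ _, fun i t => ?_⟩
  · simpa [sortedSchedule] using Tuple.apply_le_apply_sort_of_monotone_comp
      (u := fun j => r j + p 0) hrelease (fun k l hkl => Nat.add_le_add_right (hσ hkl) _)
      (σ.symm j)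
  · simpa [sortedSchedule] using Tuple.apply_le_apply_sort_of_monotone_comp
      (u := fun j => c i.castSucc j + p i.succ) (hprec i)
      (fun k l hkl => Nat.add_le_add_right (Tuple.monotone_sort (c i.castSucc) hkl) _)
      (σ.symm j)
  · calc #{j | sortedSchedule c σ i j = t} = #{j | c i j = t} :=
          card_equiv (σ.symm.trans (Tuple.sort (c i))) fun _ => by simp only [mem_filter_univ]; rfl
      _ ≤ b i := hsize i t

end SortedSchedule

theorem stmt1_general {m n : ℕ} (p b : Fin (m + 1) → ℕ) (r : Fin (n + 1) → ℕ)
    (c : Fin (m + 1) → Fin (n + 1) → ℕ) (hc : Feasible p b r c)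
    (σ : Equiv.Perm (Fin (n + 1))) (hσ : Monotone fun j => r (σ j)) :
    ∃ chat : Fin (m + 1) → Fin (n + 1) → ℕ,
      Feasible p b r chat ∧ OrderedBy chat σ ∧
      Finset.univ.sup (fun j => chat (Fin.last m) j) ≤
        Finset.univ.sup (fun j => c (Fin.last m) j) :=
  ⟨sortedSchedule c σ, feasible_sortedSchedule c σ hc hσ, orderedBy_sortedSchedule c σ,
    (sup_sortedSchedule c σ (Fin.last m)).le⟩

/-- for any earliest release date ordering `σ` and any feasible schedule
`c`, there is a feasible permutation schedule ordered by `σ` whose makespan is at most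
the makespan of `c`; in particular such permutation schedules are optimal for
minimizing the makespan. -/
theorem stmt1 {m n : ℕ} (p b : Fin (m + 1) → ℕ) (r : Fin (n + 1) → ℕ)
    (hp : ∀ i, 1 ≤ p i) (hb : ∀ i, 1 ≤ b i ∧ b i ≤ n + 1)
    (c : Fin (m + 1) → Fin (n + 1) → ℕ) (hc : Feasible p b r c)
    (σ : Equiv.Perm (Fin (n + 1))) (hσ : Monotone fun j => r (σ j)) :
    ∃ chat : Fin (m + 1) → Fin (n + 1) → ℕ,
      Feasible p b r chat ∧ OrderedBy chat σ ∧
      Finset.univ.sup (fun j => chat (Fin.last m) j) ≤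
        Finset.univ.sup (fun j => c (Fin.last m) j) :=
  stmt1_general p b r c hc σ hσ
end

section
/- Every feasible batch-active schedule of a PFB instance is Γ-active, i.e., c_{i,j} ∈ Γ_i for all machines i and jobs j. -/
/-- The schedule obtained from `c` by starting the batch completing at time `t` on
machine `i` one time unit earlier. -/
def shiftBatch {m n : ℕ} (c : Fin (m + 1) → Fin (n + 1) → ℕ) (i : Fin (m + 1))
    (t : ℕ) : Fin (m + 1) → Fin (n + 1) → ℕ :=
  fun i' j => if i' = i ∧ c i' j = t then c i' j - 1 else c i' j

/-- A feasible schedule is batch-active if no batch can be started earlier. -/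
def BatchActive {m n : ℕ} (p b : Fin (m + 1) → ℕ) (r : Fin (n + 1) → ℕ)
    (c : Fin (m + 1) → Fin (n + 1) → ℕ) : Prop :=
  ∀ (i : Fin (m + 1)) (t : ℕ), (∃ j, c i j = t) →
    ¬ Feasible p b r (shiftBatch c i t)

/-- `Gamma p r i` is the set
`{ r j' + ∑_{i' ≤ i} λ_{i'}·p_{i'} | j' a job, λ_{i'} ∈ {1,…,n+1} }`. -/
def Gamma {m n : ℕ} (p : Fin (m + 1) → ℕ) (r : Fin (n + 1) → ℕ)
    (i : Fin (m + 1)) : Set ℕ :=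
  { x | ∃ (j' : Fin (n + 1)) (lam : Fin (m + 1) → ℕ),
      (∀ i' ≤ i, 1 ≤ lam i' ∧ lam i' ≤ n + 1) ∧
      x = r j' + ∑ i' ∈ Finset.Iic i, lam i' * p i' }

/-!
A batch that cannot be started earlier is held back either by one of its jobs, which only
became ready on the previous machine (or was released) exactly `p i` before, or by the
preceding batch on the same machine, which completed exactly `p i` before. Following the
second alternative backwards yields an arithmetic progression of completion times with
difference `p i`, starting at a ready time; it has at most `n + 1` terms because there are
only `n + 1` jobs. Induction on the machines then places every completion time in `Γ_i`.
-/

def readyTime {m n : ℕ} (r : Fin (n + 1) → ℕ) (c : Fin (m + 1) → Fin (n + 1) → ℕ)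
    (i : Fin (m + 1)) (j : Fin (n + 1)) : ℕ :=
  Fin.cases (r j) (fun i₀ => c i₀.castSucc j) i

section ArithmeticChain

variable {S G : Set ℕ} {p : ℕ}

theorem exists_progression_of_step
    (hstep : ∀ t ∈ S, (∃ g ∈ G, g + p = t) ∨ ∃ s ∈ S, s + p = t) (hp : 0 < p) :
    ∀ t ∈ S, ∃ g ∈ G, ∃ k, t = g + (k + 1) * p ∧ ∀ l ≤ k, g + (l + 1) * p ∈ S := by
  intro t
  induction t using Nat.strong_induction_on with
  | _ t ih =>
    intro ht
    rcases hstep t ht with ⟨g, hg, rfl⟩ | ⟨s, hs, rfl⟩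
    · exact ⟨g, hg, 0, by ring, fun l hl => by simpa [Nat.le_zero.mp hl] using ht⟩
    · obtain ⟨g, hg, k, rfl, hprog⟩ := ih s (by omega) hs
      refine ⟨g, hg, k + 1, by ring, fun l hl => ?_⟩
      rcases Nat.lt_or_ge l (k + 1) with hlt | hge
      · exact hprog l (by omega)
      · obtain rfl : l = k + 1 := by omega
        convert ht using 1
        ring

theorem card_le_of_progression_subset {T : Finset ℕ} {g k : ℕ} (hp : 0 < p)
    (hprog : ∀ l ≤ k, g + (l + 1) * p ∈ T) : k + 1 ≤ T.card := by
  have hinj : Set.InjOn (fun l => g + (l + 1) * p) (Finset.range (k + 1)) := by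
    intro a _ b _ hab
    simpa [hp.ne'] using hab
  simpa using Finset.card_le_card_of_injOn _
    (fun l hl => hprog l (Nat.lt_succ_iff.mp (Finset.mem_range.mp hl))) hinj

end ArithmeticChain

section Schedule

variable {m n : ℕ} {p b : Fin (m + 1) → ℕ} {r : Fin (n + 1) → ℕ}
  {c : Fin (m + 1) → Fin (n + 1) → ℕ}

theorem Feasible.readyTime_add_le (hc : Feasible p b r c) (i : Fin (m + 1)) (j : Fin (n + 1)) :
    readyTime r c i j + p i ≤ c i j := by
  induction i using Fin.cases with
  | zero => exact hc.1 j
  | succ i₀ => exact hc.2.1 i₀ j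

theorem shiftBatch_of_eq {i : Fin (m + 1)} {t : ℕ} {j : Fin (n + 1)} (h : c i j = t) :
    shiftBatch c i t i j = t - 1 := by
  simp [shiftBatch, h]

theorem shiftBatch_of_ne {i i' : Fin (m + 1)} {t : ℕ} {j : Fin (n + 1)}
    (h : ¬(i' = i ∧ c i' j = t)) : shiftBatch c i t i' j = c i' j :=
  if_neg h

theorem shiftBatch_le (i i' : Fin (m + 1)) (t : ℕ) (j : Fin (n + 1)) :
    shiftBatch c i t i' j ≤ c i' j := by
  unfold shiftBatch
  split <;> omega

theorem Feasible.shiftBatch_separated {i : Fin (m + 1)} {t : ℕ} (hc : Feasible p b r c)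
    (hgap : ∀ j, c i j + p i ≠ t) (i' : Fin (m + 1)) (j j' : Fin (n + 1))
    (hne : shiftBatch c i t i' j ≠ shiftBatch c i t i' j') :
    shiftBatch c i t i' j + p i' ≤ shiftBatch c i t i' j' ∨
      shiftBatch c i t i' j' + p i' ≤ shiftBatch c i t i' j := by
  have hsep := hc.2.2.1
  by_cases hi : i' = i
  · subst hi
    by_cases hj : c i' j = t <;> by_cases hj' : c i' j' = t
    · exact absurd (by rw [shiftBatch_of_eq hj, shiftBatch_of_eq hj']) hne
    · rw [shiftBatch_of_eq hj, shiftBatch_of_ne fun h => hj' h.2]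
      have := hsep i' j j' (hj ▸ Ne.symm hj')
      have := hgap j'
      omega
    · rw [shiftBatch_of_eq hj', shiftBatch_of_ne fun h => hj h.2]
      have := hsep i' j j' (hj' ▸ hj)
      have := hgap j
      omega
    · rw [shiftBatch_of_ne fun h => hj h.2, shiftBatch_of_ne fun h => hj' h.2] at hne ⊢
      exact hsep i' j j' hne
  · rw [shiftBatch_of_ne fun h => hi h.1, shiftBatch_of_ne fun h => hi h.1] at hne ⊢
    exact hsep i' j j' hne

theorem Feasible.card_filter_shiftBatch_le {i : Fin (m + 1)} {t : ℕ} {j₀ : Fin (n + 1)}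
    (hc : Feasible p b r c) (hp : 1 ≤ p i) (hj₀ : c i j₀ = t) (hgap : ∀ j, c i j + p i ≠ t)
    (i' : Fin (m + 1)) (t' : ℕ) :
    (Finset.univ.filter fun j => shiftBatch c i t i' j = t').card ≤ b i' := by
  suffices ∃ s, Finset.univ.filter (fun j => shiftBatch c i t i' j = t') ⊆
      Finset.univ.filter (fun j => c i' j = s) from
    let ⟨s, hsub⟩ := this
    (Finset.card_le_card hsub).trans (hc.2.2.2 i' s)
  by_cases hi : i' = i
  · subst hi
    refine ⟨if t' = t - 1 then t else t', fun j hj => ?_⟩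
    simp only [Finset.mem_filter, Finset.mem_univ, true_and] at hj ⊢
    by_cases hjt : c i' j = t
    · rw [shiftBatch_of_eq hjt] at hj
      simp [← hj, hjt]
    · rw [shiftBatch_of_ne fun h => hjt h.2] at hj
      -- the shifted batch does not merge with another one: none completes at `t - 1`
      have hj' : t' ≠ t - 1 := by
        rintro rfl
        have := hc.2.2.1 i' j j₀ (hj₀ ▸ hjt)
        have := hgap j
        omega
      simp [hj', hj]
  · refine ⟨t', fun j hj => ?_⟩
    simp only [Finset.mem_filter, Finset.mem_univ, true_and] at hj ⊢
    rwa [shiftBatch_of_ne fun h => hi h.1] at hj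

theorem Feasible.shiftBatch_of_slack {i : Fin (m + 1)} {t : ℕ} {j₀ : Fin (n + 1)}
    (hc : Feasible p b r c) (hp : 1 ≤ p i) (hj₀ : c i j₀ = t)
    (hready : ∀ j, c i j = t → readyTime r c i j + p i ≠ t)
    (hgap : ∀ j, c i j + p i ≠ t) :
    Feasible p b r (shiftBatch c i t) := by
  have hslack : ∀ j, c i j = t → readyTime r c i j + p i < t := fun j hj =>
    lt_of_le_of_ne (hj ▸ hc.readyTime_add_le i j) (hready j hj)
  refine ⟨fun j => ?_, fun i₀ j => ?_, hc.shiftBatch_separated hgap,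
    hc.card_filter_shiftBatch_le hp hj₀ hgap⟩
  · by_cases h : (0 : Fin (m + 1)) = i ∧ c 0 j = t
    · obtain ⟨rfl, h⟩ := h
      rw [shiftBatch_of_eq h]
      exact Nat.le_sub_one_of_lt (hslack j h)
    · rw [shiftBatch_of_ne h]
      exact hc.1 j
  · by_cases h : i₀.succ = i ∧ c i₀.succ j = t
    · obtain ⟨rfl, h⟩ := h
      rw [shiftBatch_of_eq h,
        shiftBatch_of_ne fun h' => (Fin.castSucc_lt_succ (i := i₀)).ne h'.1]
      exact Nat.le_sub_one_of_lt (hslack j h)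
    · rw [shiftBatch_of_ne h]
      exact (Nat.add_le_add_right (shiftBatch_le i _ t j) _).trans (hc.2.1 i₀ j)

theorem BatchActive.exists_tight (hba : BatchActive p b r c) (hc : Feasible p b r c)
    (hp : ∀ i, 1 ≤ p i) {i : Fin (m + 1)} {j₀ : Fin (n + 1)} :
    (∃ j, readyTime r c i j + p i = c i j₀) ∨ ∃ j, c i j + p i = c i j₀ := by
  by_contra! h
  exact hba i _ ⟨j₀, rfl⟩ (hc.shiftBatch_of_slack (hp i) rfl (fun j _ => h.1 j) h.2)

theorem BatchActive.exists_eq_readyTime_add_mul (hba : BatchActive p b r c)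
    (hc : Feasible p b r c) (hp : ∀ i, 1 ≤ p i) (i : Fin (m + 1)) (j : Fin (n + 1)) :
    ∃ j₀ k, 1 ≤ k ∧ k ≤ n + 1 ∧ c i j = readyTime r c i j₀ + k * p i := by
  have hstep : ∀ t ∈ Set.range (c i), (∃ g ∈ Set.range (readyTime r c i), g + p i = t) ∨
      ∃ s ∈ Set.range (c i), s + p i = t := by
    rintro _ ⟨j₁, rfl⟩
    simpa using hba.exists_tight hc hp (j₀ := j₁)
  obtain ⟨_, ⟨j₀, rfl⟩, k, hk, hprog⟩ := exists_progression_of_step hstep (hp i) _ ⟨j, rfl⟩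
  have hcard : k + 1 ≤ (Finset.univ.image (c i)).card :=
    card_le_of_progression_subset (hp i) fun l hl => by simpa using hprog l hl
  have := (Finset.card_image_le (s := Finset.univ) (f := c i)).trans_eq (Finset.card_fin _)
  exact ⟨j₀, k + 1, by omega, by omega, hk⟩

end Schedule

theorem Fin.Iic_succ {m : ℕ} (i : Fin m) :
    Finset.Iic i.succ = insert i.succ (Finset.Iic i.castSucc) := by
  ext x
  rw [Finset.mem_insert, Finset.mem_Iic, Finset.mem_Iic, Fin.le_castSucc_iff, le_iff_eq_or_lt]

section Gamma

variable {m n : ℕ} {p : Fin (m + 1) → ℕ} {r : Fin (n + 1) → ℕ} {k : ℕ}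

theorem add_mul_mem_Gamma_zero (j : Fin (n + 1)) (hk₁ : 1 ≤ k) (hk₂ : k ≤ n + 1) :
    r j + k * p 0 ∈ Gamma p r 0 := by
  refine ⟨j, fun _ => k, fun _ _ => ⟨hk₁, hk₂⟩, ?_⟩
  rw [← bot_eq_zero, Finset.Iic_bot, Finset.sum_singleton]

theorem add_mul_mem_Gamma_succ {i : Fin m} {x : ℕ} (hx : x ∈ Gamma p r i.castSucc)
    (hk₁ : 1 ≤ k) (hk₂ : k ≤ n + 1) : x + k * p i.succ ∈ Gamma p r i.succ := by
  obtain ⟨j, lam, hlam, rfl⟩ := hx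
  have hnotin : i.succ ∉ Finset.Iic i.castSucc := by simp
  refine ⟨j, Function.update lam i.succ k, fun i' hi' => ?_, ?_⟩
  · rcases eq_or_ne i' i.succ with rfl | hne
    · simpa using ⟨hk₁, hk₂⟩
    · rw [Function.update_of_ne hne]
      exact hlam i' (Fin.le_castSucc_iff.mpr (lt_of_le_of_ne hi' hne))
  · rw [Fin.Iic_succ, Finset.sum_insert hnotin, add_comm (_ * _), ← add_assoc]
    simp only [Function.update_self]
    congr 2
    exact (Finset.sum_congr rfl fun i' hi' => by
      rw [Function.update_of_ne (ne_of_mem_of_not_mem hi' hnotin)]).symm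

end Gamma

theorem stmt4_general {m n : ℕ} (p b : Fin (m + 1) → ℕ) (r : Fin (n + 1) → ℕ)
    (hp : ∀ i, 1 ≤ p i)
    (c : Fin (m + 1) → Fin (n + 1) → ℕ) (hc : Feasible p b r c)
    (hba : BatchActive p b r c) :
    ∀ (i : Fin (m + 1)) (j : Fin (n + 1)), c i j ∈ Gamma p r i := by
  intro i
  induction i using Fin.induction with
  | zero =>
    intro j
    obtain ⟨j₀, k, hk₁, hk₂, hj⟩ := hba.exists_eq_readyTime_add_mul hc hp 0 j
    exact hj ▸ add_mul_mem_Gamma_zero j₀ hk₁ hk₂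
  | succ i ih =>
    intro j
    obtain ⟨j₀, k, hk₁, hk₂, hj⟩ := hba.exists_eq_readyTime_add_mul hc hp i.succ j
    exact hj ▸ add_mul_mem_Gamma_succ (ih j₀) hk₁ hk₂

/-- every feasible batch-active schedule is Γ-active, i.e. all its
completion times lie in the sets `Gamma p r i`. -/
theorem stmt4 {m n : ℕ} (p b : Fin (m + 1) → ℕ) (r : Fin (n + 1) → ℕ)
    (hp : ∀ i, 1 ≤ p i) (hb : ∀ i, 1 ≤ b i ∧ b i ≤ n + 1)
    (c : Fin (m + 1) → Fin (n + 1) → ℕ) (hc : Feasible p b r c)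
    (hba : BatchActive p b r c) :
    ∀ (i : Fin (m + 1)) (j : Fin (n + 1)), c i j ∈ Gamma p r i :=
  stmt4_general p b r hp c hc hba
end

section
/- Let S be a feasible schedule for a PFB instance and let f be a regular objective function. Then there exists a feasible Γ-active schedule S' such that on each machine the jobs appear in the same order as in S (for every machine i and all jobs j, j': c_{i,j}(S') ≤ c_{i,j'}(S') if and only if c_{i,j}(S) ≤ c_{i,j'}(S)) and f(S') ≤ f(S). -/
namespace Stmt5Aux

variable {m n : ℕ}

/-- Greedy earliest completion time on one machine: for a target (original) time `t`,
the new time is the max of the base constraints of jobs batched at `t`, and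
`p` after the new time of any earlier batch. -/
def newT (p : ℕ) (base v : Fin (n + 1) → ℕ) (t : ℕ) : ℕ :=
  max ((Finset.univ.filter fun j => v j = t).sup base)
      ((Finset.univ.filter fun j => v j < t).attach.sup
        fun j => newT p base v (v j.1) + p)
termination_by t
decreasing_by exact (Finset.mem_filter.mp j.2).2

lemma newT_ge_base (p : ℕ) (base v : Fin (n + 1) → ℕ) (j : Fin (n + 1)) :
    base j ≤ newT p base v (v j) := by
  rw [newT]
  exact le_max_of_le_left (Finset.le_sup (by simp))

lemma newT_step (p : ℕ) (base v : Fin (n + 1) → ℕ) {j : Fin (n + 1)} {t : ℕ}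
    (h : v j < t) : newT p base v (v j) + p ≤ newT p base v t := by
  conv_rhs => rw [newT]
  refine le_max_of_le_right ?_
  exact Finset.le_sup (f := fun x => newT p base v (v x.1) + p)
    (Finset.mem_attach _ (⟨j, by simp [h]⟩ : {x // x ∈ Finset.univ.filter fun j => v j < t}))

lemma newT_cases (p : ℕ) (base v : Fin (n + 1) → ℕ) (j : Fin (n + 1)) :
    (∃ j'', v j'' = v j ∧ newT p base v (v j) = base j'') ∨
    (∃ j', v j' < v j ∧ newT p base v (v j) = newT p base v (v j') + p) := by
  have hne : (Finset.univ.filter fun j'' => v j'' = v j).Nonempty := ⟨j, by simp⟩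
  obtain ⟨j'', hj''mem, hj''⟩ := Finset.exists_mem_eq_sup _ hne base
  have hj''eq : v j'' = v j := (Finset.mem_filter.mp hj''mem).2
  by_cases hlt : (Finset.univ.filter fun j' => v j' < v j).Nonempty
  · obtain ⟨j', hj'mem, hj'⟩ := Finset.exists_mem_eq_sup _
      (Finset.attach_nonempty_iff.mpr hlt) (fun x => newT p base v (v x.1) + p)
    rcases le_total ((Finset.univ.filter fun j' => v j' < v (j : Fin (n+1))).attach.sup
        fun x => newT p base v (v x.1) + p)
        ((Finset.univ.filter fun j'' => v j'' = v j).sup base) with h | h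
    · left
      refine ⟨j'', hj''eq, ?_⟩
      rw [newT]
      rw [max_eq_left h, hj'']
    · right
      refine ⟨j'.1, (Finset.mem_filter.mp j'.2).2, ?_⟩
      conv_lhs => rw [newT]
      rw [max_eq_right h, hj']
  · left
    refine ⟨j'', hj''eq, ?_⟩
    rw [newT]
    rw [Finset.not_nonempty_iff_eq_empty.mp hlt]
    simp [hj'']

lemma newT_le (p : ℕ) (base v : Fin (n + 1) → ℕ) (hbase : ∀ j, base j ≤ v j)
    (hgap : ∀ j j', v j < v j' → v j + p ≤ v j') (j : Fin (n + 1)) :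
    newT p base v (v j) ≤ v j := by
  suffices H : ∀ t, ∀ j : Fin (n + 1), v j = t → newT p base v t ≤ t by
    have := H (v j) j rfl; exact this
  intro t
  induction t using Nat.strong_induction_on with
  | _ t ih =>
    intro j hj
    rw [newT]
    apply max_le
    · exact Finset.sup_le fun j'' hj'' =>
        le_of_le_of_eq (hbase j'') (Finset.mem_filter.mp hj'').2
    · apply Finset.sup_le
      intro x _
      have hlt := (Finset.mem_filter.mp x.2).2
      have h1 := ih (v x.1) hlt x.1 rfl
      have h2 : v x.1 + p ≤ t := by
        subst hj; exact hgap _ _ hlt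
      omega

lemma newT_le_iff {p : ℕ} (hp : 1 ≤ p) (base v : Fin (n + 1) → ℕ) (j j' : Fin (n + 1)) :
    newT p base v (v j) ≤ newT p base v (v j') ↔ v j ≤ v j' := by
  constructor
  · intro h
    by_contra hlt
    push_neg at hlt
    have := newT_step p base v hlt
    omega
  · intro h
    rcases lt_or_eq_of_le h with hlt | heq
    · have := newT_step p base v hlt
      omega
    · rw [heq]

/-- `Gamma` membership together with a bound `K` on the last multiplier. -/
def GammaB (p : Fin (m + 1) → ℕ) (r : Fin (n + 1) → ℕ) (i : Fin (m + 1))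
    (K : ℕ) (x : ℕ) : Prop :=
  ∃ (j' : Fin (n + 1)) (lam : Fin (m + 1) → ℕ),
    (∀ i' ≤ i, 1 ≤ lam i' ∧ lam i' ≤ n + 1) ∧ lam i ≤ K ∧
    x = r j' + ∑ i' ∈ Finset.Iic i, lam i' * p i'

lemma gammaB_mono {p : Fin (m + 1) → ℕ} {r : Fin (n + 1) → ℕ} {i : Fin (m + 1)}
    {K K' x : ℕ} (h : GammaB p r i K x) (hK : K ≤ K') : GammaB p r i K' x := by
  obtain ⟨j', lam, h1, h2, h3⟩ := h
  exact ⟨j', lam, h1, le_trans h2 hK, h3⟩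

lemma Iic_zero_fin : (Finset.Iic (0 : Fin (m + 1))) = {0} := by
  ext x; simp [Fin.le_zero_iff]

lemma Iic_succ_fin (i : Fin m) :
    (Finset.Iic (i.succ : Fin (m + 1))) = insert i.succ (Finset.Iic i.castSucc) := by
  ext x
  simp only [Finset.mem_Iic, Finset.mem_insert, Fin.le_def, Fin.ext_iff, Fin.val_succ,
    Fin.coe_castSucc]
  omega

lemma succ_notMem_Iic (i : Fin m) : (i.succ : Fin (m + 1)) ∉ Finset.Iic i.castSucc := by
  simp only [Finset.mem_Iic, Fin.le_def, Fin.val_succ, Fin.coe_castSucc]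
  omega

lemma gammaB_base_zero (p : Fin (m + 1) → ℕ) (r : Fin (n + 1) → ℕ) (j : Fin (n + 1)) :
    GammaB p r 0 1 (r j + p 0) := by
  refine ⟨j, fun _ => 1, fun i' _ => ⟨le_refl 1, by norm_num⟩, le_refl 1, ?_⟩
  rw [Iic_zero_fin]
  simp

lemma gammaB_succ_of_gamma {p : Fin (m + 1) → ℕ} {r : Fin (n + 1) → ℕ} (i : Fin m)
    {x : ℕ} (h : x ∈ Gamma p r i.castSucc) : GammaB p r i.succ 1 (x + p i.succ) := by
  obtain ⟨j', lam, hlam, hx⟩ := h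
  refine ⟨j', Function.update lam i.succ 1, ?_, ?_, ?_⟩
  · intro i' hi'
    rcases eq_or_ne i' i.succ with h1 | h1
    · subst h1
      rw [Function.update_self]
      exact ⟨le_refl 1, by omega⟩
    · rw [Function.update_of_ne h1]
      apply hlam
      have h2 : i'.val ≤ i.val + 1 := hi'
      have h3 : i'.val ≠ i.val + 1 := fun hh => h1 (Fin.ext hh)
      show i'.val ≤ (i.castSucc : Fin (m+1)).val
      simp only [Fin.coe_castSucc]
      omega
  · rw [Function.update_self]
  · rw [Iic_succ_fin, Finset.sum_insert (succ_notMem_Iic i), Function.update_self, hx]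
    have hcong : ∑ i' ∈ Finset.Iic i.castSucc, Function.update lam i.succ 1 i' * p i'
        = ∑ i' ∈ Finset.Iic i.castSucc, lam i' * p i' := by
      refine Finset.sum_congr rfl fun y hy => ?_
      rw [Function.update_of_ne (fun hh => succ_notMem_Iic i (by rw [← hh]; exact hy))]
    rw [hcong]
    omega

lemma gammaB_step {p : Fin (m + 1) → ℕ} {r : Fin (n + 1) → ℕ} {i : Fin (m + 1)}
    {K x : ℕ} (h : GammaB p r i K x) (hK : K + 1 ≤ n + 1) :
    GammaB p r i (K + 1) (x + p i) := by
  obtain ⟨j', lam, hlam, hKi, hx⟩ := h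
  refine ⟨j', Function.update lam i (lam i + 1), ?_, ?_, ?_⟩
  · intro i' hi'
    rcases eq_or_ne i' i with h1 | h1
    · subst h1
      rw [Function.update_self]
      exact ⟨by omega, by omega⟩
    · rw [Function.update_of_ne h1]
      exact hlam i' hi'
  · rw [Function.update_self]; omega
  · have hmem : i ∈ Finset.Iic i := Finset.mem_Iic.mpr le_rfl
    rw [Finset.sum_eq_sum_sdiff_singleton_add hmem
      (fun i' => Function.update lam i (lam i + 1) i' * p i'), Function.update_self]
    rw [hx, Finset.sum_eq_sum_sdiff_singleton_add hmem (fun i' => lam i' * p i')]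
    have hcong : ∑ i' ∈ Finset.Iic i \ {i}, Function.update lam i (lam i + 1) i' * p i'
        = ∑ i' ∈ Finset.Iic i \ {i}, lam i' * p i' := by
      refine Finset.sum_congr rfl fun y hy => ?_
      rw [Function.update_of_ne (by simpa using (Finset.mem_sdiff.mp hy).2)]
    rw [hcong, add_mul, one_mul]
    ring

lemma newT_gammaB (p : Fin (m + 1) → ℕ) (r : Fin (n + 1) → ℕ) (i : Fin (m + 1))
    (base v : Fin (n + 1) → ℕ) (hbase : ∀ j, GammaB p r i 1 (base j)) (j : Fin (n + 1)) :
    GammaB p r i ((Finset.univ.filter fun j'' => v j'' ≤ v j).card)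
      (newT (p i) base v (v j)) := by
  suffices H : ∀ t, ∀ j : Fin (n + 1), v j = t →
      GammaB p r i ((Finset.univ.filter fun j'' => v j'' ≤ v j).card)
        (newT (p i) base v (v j)) from H (v j) j rfl
  intro t
  induction t using Nat.strong_induction_on with
  | _ t ih =>
    intro j hj
    have hjmem : j ∈ Finset.univ.filter fun j'' => v j'' ≤ v j := by simp
    have hcard1 : 1 ≤ (Finset.univ.filter fun j'' => v j'' ≤ v j).card :=
      Finset.card_pos.mpr ⟨j, hjmem⟩
    rcases newT_cases (p i) base v j with ⟨j'', _, heq⟩ | ⟨j', hj', heq⟩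
    · rw [heq]
      exact gammaB_mono (hbase j'') hcard1
    · rw [heq]
      have hsub : (Finset.univ.filter fun j'' => v j'' ≤ v j').card + 1
          ≤ (Finset.univ.filter fun j'' => v j'' ≤ v j).card := by
        have h1 : insert j (Finset.univ.filter fun j'' => v j'' ≤ v j')
            ⊆ Finset.univ.filter fun j'' => v j'' ≤ v j := by
          intro x hx
          rcases Finset.mem_insert.mp hx with h | h
          · subst h; simp
          · simp only [Finset.mem_filter, Finset.mem_univ, true_and] at h ⊢
            exact le_of_lt (lt_of_le_of_lt h hj')
        have h2 : j ∉ Finset.univ.filter fun j'' => v j'' ≤ v j' := by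
          simp only [Finset.mem_filter, Finset.mem_univ, true_and]
          omega
        calc (Finset.univ.filter fun j'' => v j'' ≤ v j').card + 1
            = (insert j (Finset.univ.filter fun j'' => v j'' ≤ v j')).card := by
              rw [Finset.card_insert_of_notMem h2]
          _ ≤ _ := Finset.card_le_card h1
      have hKn : (Finset.univ.filter fun j'' => v j'' ≤ v j').card + 1 ≤ n + 1 := by
        have := Finset.card_le_univ (Finset.univ.filter fun j'' => v j'' ≤ v j)
        simp only [Finset.card_univ, Fintype.card_fin] at this
        omega
      have IH := ih (v j') (hj ▸ hj') j' rfl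
      exact gammaB_mono (gammaB_step IH hKn) hsub

/-- The new (Γ-active) schedule, built machine by machine. -/
def cPrime (p : Fin (m + 1) → ℕ) (r : Fin (n + 1) → ℕ)
    (c : Fin (m + 1) → Fin (n + 1) → ℕ) : Fin (m + 1) → Fin (n + 1) → ℕ :=
  fun i => Fin.induction
    (fun j => newT (p 0) (fun j' => r j' + p 0) (c 0) (c 0 j))
    (fun i2 prev j => newT (p i2.succ) (fun j' => prev j' + p i2.succ)
      (c i2.succ) (c i2.succ j)) i

lemma cPrime_zero (p : Fin (m + 1) → ℕ) (r : Fin (n + 1) → ℕ)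
    (c : Fin (m + 1) → Fin (n + 1) → ℕ) :
    cPrime p r c 0 = fun j => newT (p 0) (fun j' => r j' + p 0) (c 0) (c 0 j) := by
  simp [cPrime]

lemma cPrime_succ (p : Fin (m + 1) → ℕ) (r : Fin (n + 1) → ℕ)
    (c : Fin (m + 1) → Fin (n + 1) → ℕ) (i : Fin m) :
    cPrime p r c i.succ = fun j => newT (p i.succ)
      (fun j' => cPrime p r c i.castSucc j' + p i.succ) (c i.succ) (c i.succ j) := by
  simp [cPrime, Fin.induction_succ]

lemma cPrime_le_and_gamma (p b : Fin (m + 1) → ℕ) (r : Fin (n + 1) → ℕ)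
    (c : Fin (m + 1) → Fin (n + 1) → ℕ) (hc : Feasible p b r c) :
    ∀ i, (∀ j, cPrime p r c i j ≤ c i j) ∧ (∀ j, cPrime p r c i j ∈ Gamma p r i) := by
  have hgap : ∀ (i : Fin (m + 1)) (j j' : Fin (n + 1)),
      c i j < c i j' → c i j + p i ≤ c i j' := by
    intro i j j' h
    rcases hc.2.2.1 i j j' (by omega) with h1 | h1
    · exact h1
    · omega
  intro i
  induction i using Fin.induction with
  | zero =>
    rw [cPrime_zero]
    refine ⟨fun j => newT_le (p 0) _ (c 0) (fun j' => hc.1 j') (hgap 0) j, fun j => ?_⟩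
    obtain ⟨j', lam, h1, _, h3⟩ :=
      newT_gammaB p r 0 _ (c 0) (fun j' => gammaB_base_zero p r j') j
    exact ⟨j', lam, h1, h3⟩
  | succ i ihi =>
    rw [cPrime_succ]
    have hbase : ∀ j', GammaB p r i.succ 1 (cPrime p r c i.castSucc j' + p i.succ) :=
      fun j' => gammaB_succ_of_gamma i (ihi.2 j')
    refine ⟨fun j => ?_, fun j => ?_⟩
    · refine newT_le (p i.succ) _ (c i.succ) (fun j' => ?_) (hgap i.succ) j
      calc cPrime p r c i.castSucc j' + p i.succ ≤ c i.castSucc j' + p i.succ := by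
            have := ihi.1 j'; omega
        _ ≤ c i.succ j' := hc.2.1 i j'
    · obtain ⟨j', lam, h1, _, h3⟩ := newT_gammaB p r i.succ _ (c i.succ) hbase j
      exact ⟨j', lam, h1, h3⟩

lemma cPrime_shape (p : Fin (m + 1) → ℕ) (r : Fin (n + 1) → ℕ)
    (c : Fin (m + 1) → Fin (n + 1) → ℕ) (i : Fin (m + 1)) :
    ∃ base, cPrime p r c i = fun j => newT (p i) base (c i) (c i j) := by
  induction i using Fin.cases with
  | zero => exact ⟨_, cPrime_zero p r c⟩
  | succ i2 => exact ⟨_, cPrime_succ p r c i2⟩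

end Stmt5Aux

open Stmt5Aux in
/-- for every feasible schedule `c` and every regular objective function
`F` there is a feasible Γ-active schedule `c'` with the same job order on each machine
and `F (C(c')) ≤ F (C(c))`. -/
theorem stmt5 {m n : ℕ} (p b : Fin (m + 1) → ℕ) (r : Fin (n + 1) → ℕ)
    (hp : ∀ i, 1 ≤ p i) (hb : ∀ i, 1 ≤ b i ∧ b i ≤ n + 1)
    (c : Fin (m + 1) → Fin (n + 1) → ℕ) (hc : Feasible p b r c)
    (F : (Fin (n + 1) → ℕ) → ℝ) (hF : Monotone F) :
    ∃ c' : Fin (m + 1) → Fin (n + 1) → ℕ,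
      Feasible p b r c' ∧
      (∀ (i : Fin (m + 1)) (j : Fin (n + 1)), c' i j ∈ Gamma p r i) ∧
      (∀ (i : Fin (m + 1)) (j j' : Fin (n + 1)),
        c' i j ≤ c' i j' ↔ c i j ≤ c i j') ∧
      F (fun j => c' (Fin.last m) j) ≤ F (fun j => c (Fin.last m) j) := by
  classical
  refine ⟨cPrime p r c, ?_, ?_, ?_, ?_⟩
  · -- Feasibility
    refine ⟨?_, ?_, ?_, ?_⟩
    · intro j
      rw [cPrime_zero]
      exact newT_ge_base (p 0) (fun j' => r j' + p 0) (c 0) j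
    · intro i j
      rw [cPrime_succ]
      exact newT_ge_base (p i.succ) (fun j' => cPrime p r c i.castSucc j' + p i.succ)
        (c i.succ) j
    · intro i j j' hne
      obtain ⟨base, hsh⟩ := cPrime_shape p r c i
      rw [hsh] at hne ⊢
      rcases lt_trichotomy (c i j) (c i j') with h | h | h
      · exact Or.inl (newT_step (p i) base (c i) h)
      · exact absurd (show newT (p i) base (c i) (c i j) = newT (p i) base (c i) (c i j') by rw [h]) hne
      · exact Or.inr (newT_step (p i) base (c i) h)
    · intro i t
      obtain ⟨base, hsh⟩ := cPrime_shape p r c i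
      rw [hsh]
      by_cases hne : (Finset.univ.filter fun j => newT (p i) base (c i) (c i j) = t).Nonempty
      · obtain ⟨j0, hj0⟩ := hne
        have hj0' : newT (p i) base (c i) (c i j0) = t := (Finset.mem_filter.mp hj0).2
        have hsubset : (Finset.univ.filter fun j => newT (p i) base (c i) (c i j) = t)
            ⊆ Finset.univ.filter fun j => c i j = c i j0 := by
          intro x hx
          have hx' : newT (p i) base (c i) (c i x) = t := (Finset.mem_filter.mp hx).2
          simp only [Finset.mem_filter, Finset.mem_univ, true_and]
          have h1 : c i x ≤ c i j0 :=
            (newT_le_iff (hp i) base (c i) x j0).mp (by omega)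
          have h2 : c i j0 ≤ c i x :=
            (newT_le_iff (hp i) base (c i) j0 x).mp (by omega)
          omega
        exact le_trans (Finset.card_le_card hsubset) (hc.2.2.2 i (c i j0))
      · rw [Finset.not_nonempty_iff_eq_empty.mp hne]
        simp
  · -- Gamma-active
    intro i j
    exact (cPrime_le_and_gamma p b r c hc i).2 j
  · -- same order
    intro i j j'
    obtain ⟨base, hsh⟩ := cPrime_shape p r c i
    rw [hsh]
    exact newT_le_iff (hp i) base (c i) j j'
  · -- objective
    refine hF fun j => ?_
    exact (cPrime_le_and_gamma p b r c hc (Fin.last m)).1 j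
end

section
/- Consider a PFB instance with r_j = 0 for all jobs j, and let f : ℕ^n → ℝ be an arbitrary function of the completion-time vector (C_1,…,C_n). If there exists a feasible schedule S* with f(C_1(S*),…,C_n(S*)) ≤ f(C_1(S),…,C_n(S)) for every feasible schedule S, then there also exists a feasible permutation schedule Ŝ with f(C_1(Ŝ),…,C_n(Ŝ)) ≤ f(C_1(S),…,C_n(S)) for every feasible schedule S. -/
open Finset

namespace Tuple

variable {α β : Type*} [LinearOrder α] [LinearOrder β] {n : ℕ}

theorem map_apply_sort_le_apply_sort {f : α → β} (hf : Monotone f) {u : Fin n → α}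
    {v : Fin n → β} (huv : ∀ j, f (u j) ≤ v j) (k : Fin n) :
    f (u (sort u k)) ≤ v (sort v k) := by
  by_contra! hlt
  set t := f (u (sort u k))
  -- The `k + 1` smallest values of `v` lie below `t`, which only the `k` smallest of `u` can.
  have hv : (Iic k).map (sort v).toEmbedding ⊆ univ.filter (fun j => v j < t) := by
    simp only [subset_iff, mem_map_equiv, mem_Iic, mem_filter, mem_univ, true_and]
    intro j hj
    simpa using (monotone_sort v hj).trans_lt hlt
  have hu : univ.filter (fun j => v j < t) ⊆ (Iio k).map (sort u).toEmbedding := by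
    simp only [subset_iff, mem_map_equiv, mem_Iio, mem_filter, mem_univ, true_and]
    intro j hj
    by_contra! hk
    have := hf (monotone_sort u hk)
    simp only [Function.comp_apply, Equiv.apply_symm_apply] at this
    exact (this.trans (huv j)).not_gt hj
  have := card_le_card (hv.trans hu)
  simp only [card_map, Fin.card_Iic, Fin.card_Iio] at this
  omega

end Tuple

/-- On every machine, job `σ k` receives the `k`-th smallest completion time of `c`. -/
def sortRows {m n : ℕ} (c : Fin (m + 1) → Fin (n + 1) → ℕ) (σ : Equiv.Perm (Fin (n + 1))) :
    Fin (m + 1) → Fin (n + 1) → ℕ :=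
  fun i j => c i (Tuple.sort (c i) (σ⁻¹ j))

section sortRows

variable {m n : ℕ}

theorem orderedBy_sortRows (c : Fin (m + 1) → Fin (n + 1) → ℕ) (σ : Equiv.Perm (Fin (n + 1))) :
    OrderedBy (sortRows c σ) σ := by
  intro i
  simpa [sortRows, Function.comp_def] using Tuple.monotone_sort (c i)

theorem sortRows_sort_last (c : Fin (m + 1) → Fin (n + 1) → ℕ) :
    sortRows c (Tuple.sort (c (Fin.last m))) (Fin.last m) = c (Fin.last m) := by
  funext j
  simp [sortRows]

theorem feasible_sortRows {p b : Fin (m + 1) → ℕ} {r : Fin (n + 1) → ℕ}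
    {c : Fin (m + 1) → Fin (n + 1) → ℕ}
    (hr : ∀ j j', r j = r j') (hc : Feasible p b r c) (σ : Equiv.Perm (Fin (n + 1))) :
    Feasible p b r (sortRows c σ) := by
  obtain ⟨hrelease, hchain, hgap, hbatch⟩ := hc
  refine ⟨fun j => ?_, fun i j => ?_, fun i j j' => hgap i _ _, fun i t => ?_⟩
  · rw [hr j]
    exact hrelease _
  · exact Tuple.map_apply_sort_le_apply_sort (fun _ _ h => Nat.add_le_add_right h _)
      (hchain i) (σ⁻¹ j)
  · refine le_of_eq_of_le (card_equiv (Tuple.sort (c i) * σ⁻¹) fun j => ?_) (hbatch i t)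
    simp only [mem_filter, mem_univ, true_and]
    rfl

end sortRows

theorem stmt10_general {m n : ℕ} (p b : Fin (m + 1) → ℕ) (r : Fin (n + 1) → ℕ)
    (hr : ∀ j, r j = 0)
    (F : (Fin (n + 1) → ℕ) → ℝ)
    (hopt : ∃ cstar : Fin (m + 1) → Fin (n + 1) → ℕ, Feasible p b r cstar ∧
      ∀ c : Fin (m + 1) → Fin (n + 1) → ℕ, Feasible p b r c →
        F (fun j => cstar (Fin.last m) j) ≤ F (fun j => c (Fin.last m) j)) :
    ∃ chat : Fin (m + 1) → Fin (n + 1) → ℕ,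
      Feasible p b r chat ∧ (∃ σ : Equiv.Perm (Fin (n + 1)), OrderedBy chat σ) ∧
      ∀ c : Fin (m + 1) → Fin (n + 1) → ℕ, Feasible p b r c →
        F (fun j => chat (Fin.last m) j) ≤ F (fun j => c (Fin.last m) j) := by
  obtain ⟨cstar, hfeas, hmin⟩ := hopt
  have hr_const : ∀ j j', r j = r j' := fun j j' => (hr j).trans (hr j').symm
  refine ⟨sortRows cstar (Tuple.sort (cstar (Fin.last m))), feasible_sortRows hr_const hfeas _,
    ⟨_, orderedBy_sortRows cstar _⟩, fun c hc => ?_⟩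
  rw [sortRows_sort_last]
  exact hmin c hc

/-- with all release dates `0` and an arbitrary objective `F` of the
completion-time vector, if some feasible schedule is optimal, then some feasible
permutation schedule is optimal. -/
theorem stmt10 {m n : ℕ} (p b : Fin (m + 1) → ℕ) (r : Fin (n + 1) → ℕ)
    (hp : ∀ i, 1 ≤ p i) (hb : ∀ i, 1 ≤ b i ∧ b i ≤ n + 1)
    (hr : ∀ j, r j = 0)
    (F : (Fin (n + 1) → ℕ) → ℝ)
    (hopt : ∃ cstar : Fin (m + 1) → Fin (n + 1) → ℕ, Feasible p b r cstar ∧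
      ∀ c : Fin (m + 1) → Fin (n + 1) → ℕ, Feasible p b r c →
        F (fun j => cstar (Fin.last m) j) ≤ F (fun j => c (Fin.last m) j)) :
    ∃ chat : Fin (m + 1) → Fin (n + 1) → ℕ,
      Feasible p b r chat ∧ (∃ σ : Equiv.Perm (Fin (n + 1)), OrderedBy chat σ) ∧
      ∀ c : Fin (m + 1) → Fin (n + 1) → ℕ, Feasible p b r c →
        F (fun j => chat (Fin.last m) j) ≤ F (fun j => c (Fin.last m) j) :=
  stmt10_general p b r hr F hopt
end

section
/- Consider a PFB instance with r_j = 0 for all jobs j and nonnegative weights satisfying w_1 ≥ w_2 ≥ … ≥ w_n. Then for every feasible schedule S there exists a feasible permutation schedule Ŝ ordered by the identity permutation (c_{i,1}(Ŝ) ≤ c_{i,2}(Ŝ) ≤ … ≤ c_{i,n}(Ŝ) for all machines i) such that Σ_{j=1}^{n} w_j·C_j(Ŝ) ≤ Σ_{j=1}^{n} w_j·C_j(S). In particular, any ordering of the jobs by non-increasing weights is optimal for minimizing the total weighted completion time. -/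
open Finset

/-- k-th order statistic is monotone under pointwise domination (with a shift). -/
lemma order_stat_mono {N : ℕ} (u v : Fin N → ℕ) (a : ℕ) (h : ∀ j, u j + a ≤ v j) (k : Fin N) :
    u (Tuple.sort u k) + a ≤ v (Tuple.sort v k) := by
  classical
  set A : Finset (Fin N) := (Finset.Iic k).image (Tuple.sort v) with hA
  set B : Finset (Fin N) := univ.filter (fun j => u j < u (Tuple.sort u k)) with hB
  have hAcard : A.card = k.1 + 1 := by
    rw [hA, Finset.card_image_of_injective _ (Tuple.sort v).injective, Fin.card_Iic]
  have hBsub : B ⊆ (Finset.Iio k).image (Tuple.sort u) := by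
    intro j hj
    simp only [hB, mem_filter, mem_univ, true_and] at hj
    refine Finset.mem_image.2 ⟨(Tuple.sort u).symm j, ?_, by simp⟩
    rw [Finset.mem_Iio]
    by_contra hle
    push_neg at hle
    have := Tuple.monotone_sort u hle
    simp only [Function.comp_apply, Equiv.apply_symm_apply] at this
    omega
  have hBcard : B.card ≤ k.1 := by
    calc B.card ≤ ((Finset.Iio k).image (Tuple.sort u)).card := Finset.card_le_card hBsub
    _ ≤ (Finset.Iio k).card := Finset.card_image_le
    _ = k.1 := Fin.card_Iio k
  have : ¬ A ⊆ B := fun hsub => by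
    have := Finset.card_le_card hsub; omega
  obtain ⟨s, hsA, hsB⟩ := Finset.not_subset.1 this
  simp only [hB, mem_filter, mem_univ, true_and, not_lt] at hsB
  obtain ⟨l, hl, rfl⟩ := Finset.mem_image.1 hsA
  have hvs : v (Tuple.sort v l) ≤ v (Tuple.sort v k) := Tuple.monotone_sort v (Finset.mem_Iic.1 hl)
  have := h (Tuple.sort v l)
  omega

/-- Composing with a permutation preserves level-set cardinalities. -/
lemma card_filter_perm_s11 {N : ℕ} (f : Fin N → ℕ) (σ : Equiv.Perm (Fin N)) (t : ℕ) :
    (univ.filter (fun j => f (σ j) = t)).card = (univ.filter (fun j => f j = t)).card := by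
  classical
  refine Finset.card_bij (fun j _ => σ j) ?_ ?_ ?_
  · intro j hj
    simp only [mem_filter, mem_univ, true_and] at hj ⊢
    exact hj
  · intro j _ j' _ h; exact σ.injective h
  · intro j' hj'
    refine ⟨σ.symm j', ?_, by simp⟩
    simp only [mem_filter, mem_univ, true_and, Equiv.apply_symm_apply] at *
    exact hj'



/-- with all release dates `0` and nonnegative, non-increasing weights
`w 0 ≥ w 1 ≥ … ≥ w n`, for every feasible schedule `c` there is a feasible permutation
schedule ordered by the identity permutation whose total weighted completion time is
at most that of `c`; in particular a non-increasing weight ordering is optimal for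
minimizing the total weighted completion time. -/
theorem stmt11 {m n : ℕ} (p b : Fin (m + 1) → ℕ) (r : Fin (n + 1) → ℕ)
    (hp : ∀ i, 1 ≤ p i) (hb : ∀ i, 1 ≤ b i ∧ b i ≤ n + 1)
    (hr : ∀ j, r j = 0)
    (w : Fin (n + 1) → ℝ) (hw : ∀ j, 0 ≤ w j) (hw' : Antitone w)
    (c : Fin (m + 1) → Fin (n + 1) → ℕ) (hc : Feasible p b r c) :
    ∃ chat : Fin (m + 1) → Fin (n + 1) → ℕ,
      Feasible p b r chat ∧ (∀ i : Fin (m + 1), Monotone (chat i)) ∧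
      ∑ j, w j * (chat (Fin.last m) j : ℝ) ≤
        ∑ j, w j * (c (Fin.last m) j : ℝ) := by
  classical
  obtain ⟨h1, h2, h3, h4⟩ := hc
  refine ⟨fun i j => c i (Tuple.sort (c i) j), ⟨?_, ?_, ?_, ?_⟩, ?_, ?_⟩
  · intro j
    have := h1 (Tuple.sort (c 0) j)
    simpa [hr] using this
  · intro i j
    exact order_stat_mono (c i.castSucc) (c i.succ) (p i.succ) (fun j => h2 i j) j
  · intro i j j' hne
    exact h3 i _ _ hne
  · intro i t
    rw [card_filter_perm_s11 (c i) (Tuple.sort (c i)) t]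
    exact h4 i t
  · intro i
    exact Tuple.monotone_sort (c i)
  · set σ := Tuple.sort (c (Fin.last m)) with hσ
    have hmono : Monotone (fun j => ((c (Fin.last m) (σ j) : ℕ) : ℝ)) := by
      intro a b hab
      exact Nat.cast_le.2 (Tuple.monotone_sort (c (Fin.last m)) hab)
    have hanti : Antivary w (fun j => ((c (Fin.last m) (σ j) : ℕ) : ℝ)) := by
      intro i j hij
      by_contra hlt
      push_neg at hlt
      have hji : ¬ j ≤ i := fun hle => absurd (hmono hle) (not_le.2 hij)
      exact absurd (hw' (le_of_not_ge hji)) (not_le.2 hlt)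
    have := hanti.sum_smul_le_sum_smul_comp_perm (σ := σ⁻¹)
    simpa [smul_eq_mul] using this
end

section
/- Consider a PFB instance with r_j = 0 for all jobs j and due dates satisfying d_1 ≤ d_2 ≤ … ≤ d_n. Then for every feasible schedule S there exists a feasible permutation schedule Ŝ ordered by the identity permutation (c_{i,1}(Ŝ) ≤ c_{i,2}(Ŝ) ≤ … ≤ c_{i,n}(Ŝ) for all machines i) such that max_{j∈{1,…,n}} (C_j(Ŝ) − d_j) ≤ max_{j∈{1,…,n}} (C_j(S) − d_j), where the differences are taken in ℤ. In particular, any earliest due date ordering is optimal for minimizing the maximum lateness. -/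
open Finset


lemma perm_filter_card {N : ℕ} (σ : Equiv.Perm (Fin N)) (P : Fin N → Prop) [DecidablePred P] :
    (univ.filter fun l => P (σ l)).card = (univ.filter P).card := by
  apply Finset.card_bij (fun l _ => σ l)
  · intro a ha; simp only [mem_filter, mem_univ, true_and] at ha ⊢; exact ha
  · intro a _ b _ h; exact σ.injective h
  · intro b hb
    refine ⟨σ.symm b, ?_, by simp⟩
    simp only [mem_filter, mem_univ, true_and] at hb ⊢
    simpa using hb

/-- the `j`-th order statistic is attained at some index `k ≤ j` in the sense that
some `k ≤ j` has `f k` at least the `j`-th smallest value. -/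
lemma exists_le_ge {N : ℕ} (f : Fin (N + 1) → ℕ) (σ : Equiv.Perm (Fin (N + 1)))
    (hσ : Monotone (fun l => f (σ l))) (j : Fin (N + 1)) :
    ∃ k, k ≤ j ∧ f (σ j) ≤ f k := by
  by_contra h
  push_neg at h
  have hsub : Finset.Iic j ⊆ univ.filter fun k => f k < f (σ j) := by
    intro k hk
    simp only [mem_filter, mem_univ, true_and]
    exact h k (Finset.mem_Iic.mp hk)
  have h1 : j.1 + 1 ≤ (univ.filter fun k => f k < f (σ j)).card := by
    have := Finset.card_le_card hsub
    rwa [Fin.card_Iic] at this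
  have h2 : (univ.filter fun k => f k < f (σ j)).card ≤ j.1 := by
    rw [← perm_filter_card σ]
    have hsub2 : (univ.filter fun l => f (σ l) < f (σ j)) ⊆ Finset.Iio j := by
      intro l hl
      simp only [mem_filter, mem_univ, true_and] at hl
      rw [Finset.mem_Iio]
      by_contra hlj
      exact absurd (hσ (not_lt.mp hlj)) (not_le.mpr hl)
    have := Finset.card_le_card hsub2
    rwa [Fin.card_Iio] at this
  omega

/-- order statistics are pointwise monotone. -/
lemma order_stat_le {N : ℕ} (f g : Fin (N + 1) → ℕ) (σf σg : Equiv.Perm (Fin (N + 1)))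
    (hf : Monotone (fun l => f (σf l))) (hg : Monotone (fun l => g (σg l)))
    (hfg : ∀ k, f k ≤ g k) (j : Fin (N + 1)) : f (σf j) ≤ g (σg j) := by
  by_contra h
  push_neg at h
  set X := f (σf j) with hX
  have hsub : (Finset.Iic j).image σg ⊆ univ.filter fun k => f k < X := by
    intro k hk
    obtain ⟨l, hl, rfl⟩ := Finset.mem_image.mp hk
    simp only [mem_filter, mem_univ, true_and]
    calc f (σg l) ≤ g (σg l) := hfg _
      _ ≤ g (σg j) := hg (Finset.mem_Iic.mp hl)
      _ < X := h
  have h1 : j.1 + 1 ≤ (univ.filter fun k => f k < X).card := by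
    have := Finset.card_le_card hsub
    rwa [Finset.card_image_of_injective _ σg.injective, Fin.card_Iic] at this
  have h2 : (univ.filter fun k => f k < X).card ≤ j.1 := by
    rw [← perm_filter_card σf]
    have hsub2 : (univ.filter fun l => f (σf l) < X) ⊆ Finset.Iio j := by
      intro l hl
      simp only [mem_filter, mem_univ, true_and] at hl
      rw [Finset.mem_Iio]
      by_contra hlj
      exact absurd (hf (not_lt.mp hlj)) (not_le.mpr hl)
    have := Finset.card_le_card hsub2
    rwa [Fin.card_Iio] at this
  omega



/-- with all release dates `0` and non-decreasing due dates
`d 0 ≤ d 1 ≤ … ≤ d n`, for every feasible schedule `c` there is a feasible permutation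
schedule ordered by the identity permutation whose maximum lateness (computed in `ℤ`)
is at most that of `c`; in particular an earliest due date ordering is optimal for
minimizing the maximum lateness. -/
theorem stmt12 {m n : ℕ} (p b : Fin (m + 1) → ℕ) (r : Fin (n + 1) → ℕ)
    (hp : ∀ i, 1 ≤ p i) (hb : ∀ i, 1 ≤ b i ∧ b i ≤ n + 1)
    (hr : ∀ j, r j = 0)
    (d : Fin (n + 1) → ℕ) (hd : Monotone d)
    (c : Fin (m + 1) → Fin (n + 1) → ℕ) (hc : Feasible p b r c) :
    ∃ chat : Fin (m + 1) → Fin (n + 1) → ℕ,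
      Feasible p b r chat ∧ (∀ i : Fin (m + 1), Monotone (chat i)) ∧
      Finset.univ.sup' Finset.univ_nonempty
          (fun j => (chat (Fin.last m) j : ℤ) - (d j : ℤ)) ≤
        Finset.univ.sup' Finset.univ_nonempty
          (fun j => (c (Fin.last m) j : ℤ) - (d j : ℤ)) := by
  obtain ⟨h1, h2, h3, h4⟩ := hc
  set σ : Fin (m + 1) → Equiv.Perm (Fin (n + 1)) := fun i => Tuple.sort (c i) with hσ
  have hmono : ∀ i, Monotone fun j => c i (σ i j) := fun i => Tuple.monotone_sort (c i)
  refine ⟨fun i j => c i (σ i j), ⟨?_, ?_, ?_, ?_⟩, hmono, ?_⟩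
  · intro j
    have := h1 (σ 0 j)
    rw [hr] at this
    simpa [hr] using this
  · intro i j
    have := order_stat_le (fun k => c i.castSucc k + p i.succ) (c i.succ)
      (σ i.castSucc) (σ i.succ)
      (fun a b hab => Nat.add_le_add_right (hmono i.castSucc hab) _)
      (hmono i.succ) (fun k => h2 i k) j
    exact this
  · intro i j j' hne
    exact h3 i (σ i j) (σ i j') hne
  · intro i t
    calc (univ.filter fun j => c i (σ i j) = t).card
        = (univ.filter fun j => c i j = t).card := perm_filter_card (σ i) (fun j => c i j = t)
      _ ≤ b i := h4 i t
  · apply Finset.sup'_le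
    intro j _
    obtain ⟨k, hkj, hk⟩ := exists_le_ge (c (Fin.last m)) (σ (Fin.last m))
      (hmono (Fin.last m)) j
    calc ((c (Fin.last m) (σ (Fin.last m) j) : ℤ) - d j)
        ≤ (c (Fin.last m) k : ℤ) - d k := by
          have := hd hkj
          have : (d k : ℤ) ≤ d j := by exact_mod_cast hd hkj
          have h' : (c (Fin.last m) (σ (Fin.last m) j) : ℤ) ≤ c (Fin.last m) k := by
            exact_mod_cast hk
          omega
      _ ≤ _ := Finset.le_sup' (fun j => (c (Fin.last m) j : ℤ) - (d j : ℤ)) (Finset.mem_univ k)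
end

section
/- Consider a PFB instance with r_j = 0 for all jobs j and due dates satisfying d_1 ≤ d_2 ≤ … ≤ d_n. Then for every feasible schedule S there exists a feasible permutation schedule Ŝ ordered by the identity permutation (c_{i,1}(Ŝ) ≤ c_{i,2}(Ŝ) ≤ … ≤ c_{i,n}(Ŝ) for all machines i) such that Σ_{j=1}^{n} max(C_j(Ŝ) − d_j, 0) ≤ Σ_{j=1}^{n} max(C_j(S) − d_j, 0). In particular, any earliest due date ordering is optimal for minimizing the total tardiness. -/
open Finset

theorem Monotone.le_of_forall_le_comp_perm {ι α : Type*} [LinearOrder ι]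
    [LocallyFiniteOrderTop ι] [Preorder α] {u v : ι → α} (hu : Monotone u) (hv : Monotone v)
    (ρ : Equiv.Perm ι) (h : ∀ j, u j ≤ v (ρ j)) : u ≤ v := by
  intro k
  obtain ⟨j, hkj, hjk⟩ : ∃ j, k ≤ j ∧ ρ j ≤ k := by
    by_contra! H
    have hmaps : Set.MapsTo ρ (Ici k) (Ioi k) := fun j hj => by
      simpa using H j (by simpa using hj)
    have hcard := card_le_card_of_injOn ρ hmaps ρ.injective.injOn
    rw [Ici_eq_cons_Ioi, card_cons] at hcard
    omega
  exact (hu hkj).trans ((h j).trans (hv hjk))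

theorem Nat.sub_eq_sum_range_boole_mul_boole {a K : ℕ} (b : ℕ) (ha : a ≤ K) :
    a - b = ∑ t ∈ range K, (if t < a then 1 else 0) * (if b ≤ t then 1 else 0) := by
  simp_rw [ite_zero_mul_ite_zero, mul_one, sum_boole, Nat.cast_id]
  rw [← Nat.card_Ico b a]
  congr 1
  ext t
  simp only [mem_filter, mem_range, mem_Ico]
  omega

theorem sum_tsub_le_sum_comp_perm_tsub {ι : Type*} [Fintype ι] [LinearOrder ι] {s d : ι → ℕ}
    (hs : Monotone s) (hd : Monotone d) (τ : Equiv.Perm ι) :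
    ∑ i, (s i - d i) ≤ ∑ i, (s (τ i) - d i) := by
  set K := ∑ i, s i
  have hK : ∀ i, s i ≤ K := fun i => single_le_sum (fun _ _ => Nat.zero_le _) (mem_univ i)
  set f : ℕ → ι → ℕ := fun t i => if t < s i then 1 else 0
  set g : ℕ → ι → ℕ := fun t i => if d i ≤ t then 1 else 0
  have hfg : ∀ t, Antivary (f t) (g t) := fun t =>
    Monotone.antivary (fun i j hij => by have := hs hij; simp only [f]; split_ifs <;> omega)
      (fun i j hij => by have := hd hij; simp only [g]; split_ifs <;> omega)
  calc ∑ i, (s i - d i) = ∑ i, ∑ t ∈ range K, f t i * g t i :=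
        sum_congr rfl fun i _ => Nat.sub_eq_sum_range_boole_mul_boole _ (hK i)
    _ = ∑ t ∈ range K, ∑ i, f t i * g t i := sum_comm
    _ ≤ ∑ t ∈ range K, ∑ i, f t (τ i) * g t i :=
        sum_le_sum fun t _ => (hfg t).sum_mul_le_sum_comp_perm_mul
    _ = ∑ i, ∑ t ∈ range K, f t (τ i) * g t i := sum_comm
    _ = ∑ i, (s (τ i) - d i) :=
        sum_congr rfl fun i _ => (Nat.sub_eq_sum_range_boole_mul_boole _ (hK (τ i))).symm

def sortSchedule {κ α : Type*} [LinearOrder α] {N : ℕ} (c : κ → Fin N → α) : κ → Fin N → α :=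
  fun i => c i ∘ Tuple.sort (c i)

theorem monotone_sortSchedule {κ α : Type*} [LinearOrder α] {N : ℕ} (c : κ → Fin N → α) (i : κ) :
    Monotone (sortSchedule c i) :=
  Tuple.monotone_sort (c i)

theorem Feasible.sortSchedule {m n : ℕ} {p b : Fin (m + 1) → ℕ} {r : Fin (n + 1) → ℕ}
    {c : Fin (m + 1) → Fin (n + 1) → ℕ} (hr : Monotone r) (hc : Feasible p b r c) :
    Feasible p b r (sortSchedule c) := by
  obtain ⟨hrelease, hprecedence, hspacing, hbatch⟩ := hc
  refine ⟨fun j => ?_, fun i j => ?_, fun i j j' => hspacing i _ _, fun i t => ?_⟩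
  · refine Monotone.le_of_forall_le_comp_perm (u := fun j => r j + p 0)
      (fun _ _ h => Nat.add_le_add_right (hr h) _) (monotone_sortSchedule c 0)
      (Tuple.sort (c 0)).symm (fun j => ?_) j
    simpa [_root_.sortSchedule] using hrelease j
  · refine Monotone.le_of_forall_le_comp_perm
      (u := fun j => _root_.sortSchedule c i.castSucc j + p i.succ)
      (fun _ _ h => Nat.add_le_add_right (monotone_sortSchedule c _ h) _)
      (monotone_sortSchedule c i.succ)
      ((Tuple.sort (c i.castSucc)).trans (Tuple.sort (c i.succ)).symm) (fun j => ?_) j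
    simpa [_root_.sortSchedule] using hprecedence i (Tuple.sort (c i.castSucc) j)
  · refine (card_equiv (Tuple.sort (c i)) fun j => ?_).trans_le (hbatch i t)
    simp only [Finset.mem_filter, Finset.mem_univ, true_and]
    rfl

theorem sum_max_sub_sort_le {N : ℕ} (C d : Fin N → ℕ) (hd : Monotone d) :
    ∑ j, max ((C (Tuple.sort C j) : ℤ) - d j) 0 ≤ ∑ j, max ((C j : ℤ) - d j) 0 := by
  have hcast : ∀ x y : ℕ, max ((x : ℤ) - y) 0 = ((x - y : ℕ) : ℤ) := by omega
  simp only [hcast]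
  exact_mod_cast by
    simpa using sum_tsub_le_sum_comp_perm_tsub (Tuple.monotone_sort C) hd (Tuple.sort C).symm

theorem stmt13_general {m n : ℕ} (p b : Fin (m + 1) → ℕ) (r : Fin (n + 1) → ℕ)
    (hr : ∀ j, r j = 0)
    (d : Fin (n + 1) → ℕ) (hd : Monotone d)
    (c : Fin (m + 1) → Fin (n + 1) → ℕ) (hc : Feasible p b r c) :
    ∃ chat : Fin (m + 1) → Fin (n + 1) → ℕ,
      Feasible p b r chat ∧ (∀ i : Fin (m + 1), Monotone (chat i)) ∧
      ∑ j, max ((chat (Fin.last m) j : ℤ) - (d j : ℤ)) 0 ≤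
        ∑ j, max ((c (Fin.last m) j : ℤ) - (d j : ℤ)) 0 := by
  have hr_mono : Monotone r := fun j k _ => by simp [hr]
  exact ⟨sortSchedule c, hc.sortSchedule hr_mono, monotone_sortSchedule c,
    sum_max_sub_sort_le _ d hd⟩

/-- with all release dates `0` and non-decreasing due dates
`d 0 ≤ d 1 ≤ … ≤ d n`, for every feasible schedule `c` there is a feasible permutation
schedule ordered by the identity permutation whose total tardiness is at most that of
`c`; in particular an earliest due date ordering is optimal for minimizing the total
tardiness. -/
theorem stmt13 {m n : ℕ} (p b : Fin (m + 1) → ℕ) (r : Fin (n + 1) → ℕ)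
    (hp : ∀ i, 1 ≤ p i) (hb : ∀ i, 1 ≤ b i ∧ b i ≤ n + 1)
    (hr : ∀ j, r j = 0)
    (d : Fin (n + 1) → ℕ) (hd : Monotone d)
    (c : Fin (m + 1) → Fin (n + 1) → ℕ) (hc : Feasible p b r c) :
    ∃ chat : Fin (m + 1) → Fin (n + 1) → ℕ,
      Feasible p b r chat ∧ (∀ i : Fin (m + 1), Monotone (chat i)) ∧
      ∑ j, max ((chat (Fin.last m) j : ℤ) - (d j : ℤ)) 0 ≤
        ∑ j, max ((c (Fin.last m) j : ℤ) - (d j : ℤ)) 0 :=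
  stmt13_general p b r hr d hd c hc
end
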